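/- Let L ∈ 𝓛_G, D an m×m diagonal matrix with all D_{ii} > 0, Σ := LDLᵀ, and U an m×m real symmetric positive definite matrix. Suppose that for every i, (L⁻¹)_{ij} = 0 for all j < i with j ∉ N^≺(i). For each i with N^≺(i) ≠ ∅, write Σ^{≺i} := (Σ_{kl})_{k,l∈N^≺(i)}, Σ^≺_{·i} := (Σ_{ki})_{k∈N^≺(i)}, U^{≺i} := (U_{kl})_{k,l∈N^≺(i)}, U^≺_{·i} := (U_{ki})_{k∈N^≺(i)}, β^Σ_i := (Σ^{≺i})⁻¹Σ^≺_{·i}, β^U_i := (U^{≺i})⁻¹U^≺_{·i}. Then tr(Σ⁻¹U) = Σ_{i=1}^m (1/D_{ii}) [ (β^Σ_i − β^U_i)ᵀ U^{≺i} (β^Σ_i − β^U_i) + U_{ii} − (U^≺_{·i})ᵀ (U^{≺i})⁻¹ U^≺_{·i} ], where for indices i with N^≺(i) = ∅ the summand is read as U_{ii}/D_{ii}. -/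

import Mathlib

/-! Since `Σ⁻¹ = L⁻ᵀ D⁻¹ L⁻¹`, the trace is `∑ᵢ wᵢᵀ U wᵢ / Dᵢᵢ` where `wᵢ` is the `i`-th row
of `L⁻¹`. The row `wᵢ` is supported on `{i} ∪ N^≺(i)` with `wᵢᵢ = 1`, and `L⁻¹ Σ = D Lᵀ` is upper
triangular, so `(Σ wᵢ)_j = 0` for `j < i`. On `N^≺(i)` these are the normal equations
`Σ^{≺i} wᵢ^≺ = -Σ^≺_{·i}`, i.e. `wᵢ^≺ = -β^Σ_i`; completing the square of `wᵢᵀ U wᵢ` around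
`β^U_i` gives the summand. -/

open Matrix

/-- The principal submatrix `M^{≺i}` of `M` on the index set `N^≺(i) = {j : (i,j) ∈ E, j < i}`. -/
noncomputable def predSub {m : ℕ} (E : Finset (Fin m × Fin m))
    (M : Matrix (Fin m) (Fin m) ℝ) (i : Fin m) :
    Matrix {j : Fin m // (i, j) ∈ E ∧ j < i} {j : Fin m // (i, j) ∈ E ∧ j < i} ℝ :=
  Matrix.of fun k l => M (k : Fin m) (l : Fin m)

/-- The column `M^≺_{·i} = (M_{ki})_{k ∈ N^≺(i)}`. -/
noncomputable def predCol {m : ℕ} (E : Finset (Fin m × Fin m))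
    (M : Matrix (Fin m) (Fin m) ℝ) (i : Fin m) :
    {j : Fin m // (i, j) ∈ E ∧ j < i} → ℝ :=
  fun k => M (k : Fin m) i

lemma dotProduct_mulVec_sub_inv_mulVec {ι R : Type*} [Fintype ι] [DecidableEq ι] [CommRing R]
    {B : Matrix ι ι R} (hB : B.IsSymm) (hBdet : IsUnit B.det) (x u : ι → R) :
    (x - B⁻¹ *ᵥ u) ⬝ᵥ (B *ᵥ (x - B⁻¹ *ᵥ u)) - u ⬝ᵥ (B⁻¹ *ᵥ u) =
      x ⬝ᵥ (B *ᵥ x) - 2 * (x ⬝ᵥ u) := by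
  have hBB : B *ᵥ (B⁻¹ *ᵥ u) = u := by
    rw [mulVec_mulVec, mul_nonsing_inv _ hBdet, one_mulVec]
  have hsymm : ∀ y z, y ⬝ᵥ (B *ᵥ z) = z ⬝ᵥ (B *ᵥ y) := fun y z => by
    rw [dotProduct_mulVec, ← mulVec_transpose, hB.eq, dotProduct_comm]
  rw [mulVec_sub, hBB, sub_dotProduct, dotProduct_sub, dotProduct_sub, hsymm (B⁻¹ *ᵥ u) x, hBB,
    dotProduct_comm u]
  ring

section SupportedVector

variable {ι R : Type*} [Fintype ι] [CommRing R] {p : ι → Prop} [DecidablePred p] {i : ι}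

lemma Fintype.sum_eq_add_sum_subtype {f : ι → R} (hi : ¬ p i)
    (hf : ∀ j, j ≠ i → ¬ p j → f j = 0) : ∑ j, f j = f i + ∑ j : Subtype p, f j := by
  rw [← Fintype.sum_subtype_add_sum_subtype p f,
    Fintype.sum_eq_single (⟨i, hi⟩ : {j // ¬ p j}), add_comm]
  exact fun j hj => hf j (fun h => hj (Subtype.ext h)) j.2

variable {w : ι → R} (hi : ¬ p i) (hwi : w i = 1) (hw : ∀ j, j ≠ i → ¬ p j → w j = 0)
include hi hwi hw

lemma dotProduct_eq_add_dotProduct_restrict (v : ι → R) :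
    w ⬝ᵥ v = v i + Subtype.restrict p w ⬝ᵥ Subtype.restrict p v := by
  rw [dotProduct, Fintype.sum_eq_add_sum_subtype hi fun j hj hpj => by simp [hw j hj hpj], hwi,
    one_mul]
  rfl

lemma restrict_mulVec_eq_add (M : Matrix ι ι R) :
    Subtype.restrict p (M *ᵥ w) =
      Subtype.restrict p (fun k => M k i) + M.submatrix (↑) (↑) *ᵥ Subtype.restrict p w := by
  ext j
  simp only [Pi.add_apply, Subtype.restrict_apply]
  rw [mulVec, dotProduct_comm, dotProduct_eq_add_dotProduct_restrict hi hwi hw, mulVec,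
    dotProduct_comm]
  rfl

lemma restrict_eq_neg_inv_mulVec [DecidableEq ι] {S : Matrix ι ι R}
    (hS : IsUnit (S.submatrix (↑) (↑) : Matrix (Subtype p) (Subtype p) R).det)
    (hSw : Subtype.restrict p (S *ᵥ w) = 0) :
    Subtype.restrict p w =
      -((S.submatrix (↑) (↑))⁻¹ *ᵥ Subtype.restrict p (fun k => S k i)) := by
  rw [restrict_mulVec_eq_add hi hwi hw, add_eq_zero_iff_neg_eq'] at hSw
  rw [← hSw, mulVec_neg, neg_neg, mulVec_mulVec, nonsing_inv_mul _ hS, one_mulVec]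

lemma dotProduct_mulVec_eq_add_restrict {U : Matrix ι ι R} (hU : U.IsSymm) :
    w ⬝ᵥ (U *ᵥ w) =
      U i i + 2 * (Subtype.restrict p w ⬝ᵥ Subtype.restrict p (fun k => U k i)) +
        Subtype.restrict p w ⬝ᵥ (U.submatrix (↑) (↑) *ᵥ Subtype.restrict p w) := by
  rw [dotProduct_eq_add_dotProduct_restrict hi hwi hw, restrict_mulVec_eq_add hi hwi hw,
    mulVec, dotProduct_comm, dotProduct_eq_add_dotProduct_restrict hi hwi hw, dotProduct_add]
  have hrow : Subtype.restrict p (fun k => U i k) = Subtype.restrict p (fun k => U k i) := by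
    ext k
    exact (hU.apply i k).symm
  simp only [hrow]
  ring

lemma dotProduct_mulVec_eq_of_restrict_mulVec_eq_zero [DecidableEq ι] {S U : Matrix ι ι R}
    (hS : IsUnit (S.submatrix (↑) (↑) : Matrix (Subtype p) (Subtype p) R).det)
    (hSw : Subtype.restrict p (S *ᵥ w) = 0) (hU : U.IsSymm)
    (hUdet : IsUnit (U.submatrix (↑) (↑) : Matrix (Subtype p) (Subtype p) R).det) :
    let βS := (S.submatrix (↑) (↑))⁻¹ *ᵥ Subtype.restrict p (fun k => S k i)
    let u := Subtype.restrict p (fun k => U k i)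
    let βU := (U.submatrix (↑) (↑))⁻¹ *ᵥ u
    w ⬝ᵥ (U *ᵥ w) = (βS - βU) ⬝ᵥ (U.submatrix (↑) (↑) *ᵥ (βS - βU)) + U i i - u ⬝ᵥ βU := by
  intro βS u βU
  have hsq := dotProduct_mulVec_sub_inv_mulVec (hU.submatrix ((↑) : Subtype p → ι)) hUdet βS u
  rw [dotProduct_mulVec_eq_add_restrict hi hwi hw hU, restrict_eq_neg_inv_mulVec hi hwi hw hS hSw]
  simp only [neg_dotProduct, mulVec_neg, dotProduct_neg, neg_neg]
  linear_combination -hsq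

end SupportedVector

section Triangular

variable {ι R : Type*} [Fintype ι] [DecidableEq ι] [CommRing R]

theorem Matrix.BlockTriangular.nonsing_inv {α : Type*} [LinearOrder α] {b : ι → α}
    {M : Matrix ι ι R} (hM : M.BlockTriangular b) : M⁻¹.BlockTriangular b := by
  by_cases h : IsUnit M.det
  · let := M.invertibleOfIsUnitDet h
    exact blockTriangular_inv_of_blockTriangular hM
  · rw [nonsing_inv_apply_not_isUnit _ h]
    exact blockTriangular_zero

variable [LinearOrder ι] {L : Matrix ι ι R} (hL : L.IsLowerTriangular)
  (hdiag : ∀ i, L i i = 1)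
include hL hdiag

lemma det_eq_one_of_unitLowerTriangular : L.det = 1 := by
  simp [det_of_isLowerTriangular L hL, hdiag]

lemma nonsing_inv_apply_self_of_unitLowerTriangular (i : ι) : L⁻¹ i i = 1 := by
  have hdet : IsUnit L.det := by simp [det_eq_one_of_unitLowerTriangular hL hdiag]
  have hLinv := congr_fun₂ (nonsing_inv_mul L hdet) i i
  rwa [mul_apply, Finset.sum_eq_single i, hdiag, mul_one, one_apply_eq] at hLinv
  · intro j _ hji
    rcases hji.lt_or_gt with hji | hij
    · rw [hL hji, mul_zero]
    · rw [hL.nonsing_inv hij, zero_mul]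
  · simp

end Triangular

section Congruence

variable {ι : Type*} [Fintype ι] [DecidableEq ι]

lemma trace_inv_mul_diagonal_mul_transpose_mul {K : Type*} [Field K] (L U : Matrix ι ι K)
    {d : ι → K} (hd : ∀ i, d i ≠ 0) :
    ((L * diagonal d * Lᵀ)⁻¹ * U).trace = ∑ i, (d i)⁻¹ * (L⁻¹ i ⬝ᵥ (U *ᵥ L⁻¹ i)) := by
  have hdinv : (diagonal d)⁻¹ = diagonal d⁻¹ :=
    inv_eq_left_inv (by simp [diagonal_mul_diagonal, hd, ← diagonal_one])
  rw [Matrix.mul_inv_rev, Matrix.mul_inv_rev, hdinv, ← transpose_nonsing_inv, Matrix.mul_assoc,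
    trace_mul_comm, Matrix.mul_assoc, Matrix.mul_assoc]
  refine Finset.sum_congr rfl fun i _ => ?_
  rw [diag_apply, diagonal_mul]
  rfl

lemma mul_diagonal_mul_transpose_mulVec_nonsing_inv_row {R : Type*} [CommRing R]
    {L : Matrix ι ι R} (hL : IsUnit L.det) (d : ι → R) (i : ι) :
    (L * diagonal d * Lᵀ) *ᵥ L⁻¹ i = fun j => L j i * d i := by
  have hcancel : L * diagonal d * Lᵀ * L⁻¹ᵀ = L * diagonal d := by
    rw [Matrix.mul_assoc, ← transpose_mul, nonsing_inv_mul _ hL, transpose_one, Matrix.mul_one]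
  ext j
  have hji := congr_fun₂ hcancel j i
  rw [mul_diagonal] at hji
  rw [← hji]
  rfl

lemma posDef_mul_diagonal_mul_transpose {L : Matrix ι ι ℝ} (hL : IsUnit L.det) {d : ι → ℝ}
    (hd : ∀ i, 0 < d i) : (L * diagonal d * Lᵀ).PosDef := by
  simpa [conjTranspose_eq_transpose_of_trivial] using
    (PosDef.diagonal hd).mul_mul_conjTranspose_same
      (vecMul_injective_iff_isUnit.mpr ((isUnit_iff_isUnit_det L).mpr hL))

end Congruence

theorem stmt_13_general {m : ℕ} (E : Finset (Fin m × Fin m))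
    (L : Matrix (Fin m) (Fin m) ℝ)
    (hlow : ∀ i j : Fin m, i < j → L i j = 0)
    (hdiag : ∀ i : Fin m, L i i = 1)
    (hinv : ∀ i j : Fin m, j < i → (i, j) ∉ E → L⁻¹ i j = 0)
    (d : Fin m → ℝ) (hd : ∀ i, 0 < d i)
    (U : Matrix (Fin m) (Fin m) ℝ) (hU : U.PosDef) :
    Matrix.trace ((L * Matrix.diagonal d * Lᵀ)⁻¹ * U)
      = ∑ i : Fin m, (1 / d i) *
          ((((predSub E (L * Matrix.diagonal d * Lᵀ) i)⁻¹ *ᵥ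
                predCol E (L * Matrix.diagonal d * Lᵀ) i) -
              ((predSub E U i)⁻¹ *ᵥ predCol E U i)) ⬝ᵥ
            (predSub E U i *ᵥ
              (((predSub E (L * Matrix.diagonal d * Lᵀ) i)⁻¹ *ᵥ
                  predCol E (L * Matrix.diagonal d * Lᵀ) i) -
                ((predSub E U i)⁻¹ *ᵥ predCol E U i)))
            + U i i - predCol E U i ⬝ᵥ ((predSub E U i)⁻¹ *ᵥ predCol E U i)) := by
  have hLlow : L.IsLowerTriangular := fun i j h => hlow i j h
  have hL : IsUnit L.det := by simp [det_eq_one_of_unitLowerTriangular hLlow hdiag]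
  have hSigma := posDef_mul_diagonal_mul_transpose hL hd
  rw [trace_inv_mul_diagonal_mul_transpose_mul L U fun i => (hd i).ne']
  refine Finset.sum_congr rfl fun i _ => ?_
  rw [one_div]
  congr 1
  refine dotProduct_mulVec_eq_of_restrict_mulVec_eq_zero (p := fun j => (i, j) ∈ E ∧ j < i)
    (fun h => h.2.false) (nonsing_inv_apply_self_of_unitLowerTriangular hLlow hdiag i) ?_
    (hSigma.submatrix Subtype.val_injective).det_pos.ne'.isUnit ?_
    (isHermitian_iff_isSymm.mp hU.isHermitian)
    (hU.submatrix Subtype.val_injective).det_pos.ne'.isUnit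
  · intro j hji hj
    rcases hji.lt_or_gt with hji | hij
    · exact hinv i j hji fun hE => hj ⟨hE, hji⟩
    · exact hLlow.nonsing_inv hij
  · ext j
    simp [mul_diagonal_mul_transpose_mulVec_nonsing_inv_row hL, hlow j i j.2.2]

/-- with `Σ = L D Lᵀ`, `L ∈ 𝓛_G`, `(L⁻¹)_{ij} = 0` for `j < i`, `j ∉ N^≺(i)`,
`β^Σ_i = (Σ^{≺i})⁻¹ Σ^≺_{·i}` and `β^U_i = (U^{≺i})⁻¹ U^≺_{·i}`:
`tr(Σ⁻¹U) = Σᵢ (1/Dᵢᵢ)[(β^Σ_i − β^U_i)ᵀ U^{≺i} (β^Σ_i − β^U_i) + Uᵢᵢ − (U^≺_{·i})ᵀ(U^{≺i})⁻¹U^≺_{·i}]`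
(when `N^≺(i) = ∅` all the sub-vector terms vanish, so the summand reads `Uᵢᵢ/Dᵢᵢ`). -/
theorem stmt_13 {m : ℕ} (hm : 0 < m) (E : Finset (Fin m × Fin m))
    (hsymm : ∀ i j : Fin m, (i, j) ∈ E → (j, i) ∈ E)
    (hirr : ∀ i : Fin m, (i, i) ∉ E)
    (L : Matrix (Fin m) (Fin m) ℝ)
    (hlow : ∀ i j : Fin m, i < j → L i j = 0)
    (hdiag : ∀ i : Fin m, L i i = 1)
    (hLG : ∀ i j : Fin m, j < i → (i, j) ∉ E → L i j = 0)
    (hinv : ∀ i j : Fin m, j < i → (i, j) ∉ E → L⁻¹ i j = 0)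
    (d : Fin m → ℝ) (hd : ∀ i, 0 < d i)
    (U : Matrix (Fin m) (Fin m) ℝ) (hU : U.PosDef) :
    Matrix.trace ((L * Matrix.diagonal d * Lᵀ)⁻¹ * U)
      = ∑ i : Fin m, (1 / d i) *
          ((((predSub E (L * Matrix.diagonal d * Lᵀ) i)⁻¹ *ᵥ
                predCol E (L * Matrix.diagonal d * Lᵀ) i) -
              ((predSub E U i)⁻¹ *ᵥ predCol E U i)) ⬝ᵥ
            (predSub E U i *ᵥ
              (((predSub E (L * Matrix.diagonal d * Lᵀ) i)⁻¹ *ᵥ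
                  predCol E (L * Matrix.diagonal d * Lᵀ) i) -
                ((predSub E U i)⁻¹ *ᵥ predCol E U i)))
            + U i i - predCol E U i ⬝ᵥ ((predSub E U i)⁻¹ *ᵥ predCol E U i)) :=
  stmt_13_general E L hlow hdiag hinv d hd U hU
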